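/- Define x : ℕ → ℝ by x 0 = 1 − √3/2 and x (i+1) = 2·(x i)² / (1 − √3·(x i) + √(1 − 2√3·(x i) − (x i)²)); define d i = √((x (i+1))²/4 + (x i + (√3/2)·x (i+1))²), θ i = 2·arcsin(d i / 2), and a i = (x i · x (i+1))/4 − (θ i − sin (θ i))/2. Then 8.454·10⁻²¹ < a 3 < 8.455·10⁻²¹; in particular a 3 < 6·10⁻¹⁸, so Hansen's claim that the second region he removed has area 6·10⁻¹⁸ is incorrect. -/

import Mathlib

noncomputable section

/-- Hansen's recursively defined sequence of distances, in the numerically stable form. -/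
def xseq : ℕ → ℝ
  | 0 => 1 - Real.sqrt 3 / 2
  | i + 1 => 2 * (xseq i) ^ 2 /
      (1 - Real.sqrt 3 * xseq i + Real.sqrt (1 - 2 * Real.sqrt 3 * xseq i - (xseq i) ^ 2))

/-- The chord length of the arc in Hansen's sliver region. -/
def dseq (i : ℕ) : ℝ :=
  Real.sqrt ((xseq (i + 1)) ^ 2 / 4 + (xseq i + Real.sqrt 3 / 2 * xseq (i + 1)) ^ 2)

/-- The angle subtended by the chord at the center of the unit circle. -/
def θseq (i : ℕ) : ℝ := 2 * Real.arcsin (dseq i / 2)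

/-- The area of the region bounded by two line segments of lengths `x i` and `x (i+1)`
meeting at an interior angle of 150°, and an arc of a circle of radius 1. -/
def aseq (i : ℕ) : ℝ := xseq i * xseq (i + 1) / 4 - (θseq i - Real.sin (θseq i)) / 2

/-! The stable recursion `y = 2x² / (1 - √3x + √(1 - 2√3x - x²))` picks the smaller root of
`y² - (1 - √3x)y + x² = 0`, i.e. `y = x² + y² - 2xy cos 150°`; so the chord is `dᵢ = √xᵢ₊₁`, and
enclosures of `x₀, …, x₄` follow from the sign of this quadratic at rational points. For a short
chord `θ - sin θ = d³/6 + O(d⁴)`, hence `a₃ = x₄(3x₃ - √x₄)/12 + O(x₄²)` with `x₄ ≈ 1.37·10⁻¹³`. -/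

open Real Set

def hansenStep (x : ℝ) : ℝ :=
  2 * x ^ 2 / (1 - √3 * x + √(1 - 2 * √3 * x - x ^ 2))

lemma xseq_succ (i : ℕ) : xseq (i + 1) = hansenStep (xseq i) := rfl

lemma sq_sqrt_three : √3 ^ 2 = 3 := sq_sqrt (by norm_num)

lemma hansenStep_eq {x : ℝ} (hR : 0 ≤ 1 - 2 * √3 * x - x ^ 2) :
    hansenStep x = (1 - √3 * x - √(1 - 2 * √3 * x - x ^ 2)) / 2 := by
  set r := √(1 - 2 * √3 * x - x ^ 2)
  have hr : r ^ 2 = 1 - 2 * √3 * x - x ^ 2 := sq_sqrt hR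
  have hrat : (1 - √3 * x - r) * (1 - √3 * x + r) = 4 * x ^ 2 := by
    linear_combination x ^ 2 * sq_sqrt_three - hr
  rcases eq_or_ne (1 - √3 * x + r) 0 with hD | hD
  · have hx : x = 0 := by simpa [hD] using hrat.symm
    simp [hx, r] at hD
  · rw [hansenStep, div_eq_iff hD]
    linear_combination -hrat / 2

lemma hansenStep_quadratic_eq {x : ℝ} (hR : 0 ≤ 1 - 2 * √3 * x - x ^ 2) :
    hansenStep x ^ 2 - (1 - √3 * x) * hansenStep x + x ^ 2 = 0 := by
  rw [hansenStep_eq hR]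
  linear_combination (-x ^ 2 / 4) * sq_sqrt_three + sq_sqrt hR / 4

lemma two_mul_hansenStep_le {x : ℝ} (hR : 0 ≤ 1 - 2 * √3 * x - x ^ 2) :
    2 * hansenStep x ≤ 1 - √3 * x := by
  rw [hansenStep_eq hR]
  linarith [sqrt_nonneg (1 - 2 * √3 * x - x ^ 2)]

lemma lt_of_sq_sub_mul_add_neg {b c y u : ℝ} (hy : y ^ 2 - b * y + c = 0) (hyb : 2 * y ≤ b)
    (hu : u ^ 2 - b * u + c < 0) : y < u := by
  by_contra! h
  nlinarith [mul_nonneg (sub_nonneg.2 h) (by linarith : 0 ≤ b - u - y)]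

lemma lt_of_sq_sub_mul_add_pos {b c y u : ℝ} (hy : y ^ 2 - b * y + c = 0) (hub : 2 * u ≤ b)
    (hu : 0 < u ^ 2 - b * u + c) : u < y := by
  by_contra! h
  nlinarith [mul_nonneg (sub_nonneg.2 h) (by linarith : 0 ≤ b - u - y)]

lemma sqrt_three_mem : √3 ∈ Ioo 1.7320508 1.73205081 := by
  constructor
  · exact (lt_sqrt (by norm_num)).2 (by norm_num)
  · exact (sqrt_lt' (by norm_num)).2 (by norm_num)

-- For `u ≥ 0` the quadratic `u² - (1 - √3x)u + x²` increases with `√3` and with `x ≥ 0`, so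
-- its signs at the corners of the enclosures of `√3` and `x` locate the smaller root.
lemma hansenStep_mem_Ioo {x l h l' h' : ℝ} (hx : x ∈ Ioo l h)
    (hcert : 0 ≤ l ∧ 0 ≤ l' ∧ 2 * 1.73205081 * h + h ^ 2 ≤ 1 ∧ 2 * l' ≤ 1 - 1.73205081 * h ∧
      0 < l' ^ 2 - (1 - 1.7320508 * l) * l' + l ^ 2 ∧
      h' ^ 2 - (1 - 1.73205081 * h) * h' + h ^ 2 < 0) :
    hansenStep x ∈ Ioo l' h' := by
  obtain ⟨hl, hl', hR, hvertex, hlow, hhigh⟩ := hcert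
  obtain ⟨hs, hs'⟩ := sqrt_three_mem
  obtain ⟨hlx, hxh⟩ := hx
  have hR' : 0 ≤ 1 - 2 * √3 * x - x ^ 2 := by nlinarith
  have hy := hansenStep_quadratic_eq hR'
  have h'pos : 0 ≤ h' := by nlinarith
  constructor
  · refine lt_of_sq_sub_mul_add_pos hy (by nlinarith) ?_
    nlinarith [mul_le_mul hs.le hlx.le hl (by positivity : (0:ℝ) ≤ √3)]
  · refine lt_of_sq_sub_mul_add_neg hy (two_mul_hansenStep_le hR') ?_
    nlinarith [mul_le_mul hs'.le hxh.le (by linarith) (by norm_num : (0:ℝ) ≤ 1.73205081)]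

lemma xseq_zero_mem : xseq 0 ∈ Ioo 0.13397459 0.1339746 := by
  obtain ⟨hs, hs'⟩ := sqrt_three_mem
  rw [xseq]
  constructor <;> linarith

lemma chord_sq_eq_of_quadratic {x y : ℝ} (h : y ^ 2 - (1 - √3 * x) * y + x ^ 2 = 0) :
    y ^ 2 / 4 + (x + √3 / 2 * y) ^ 2 = y := by
  linear_combination h + y ^ 2 / 4 * sq_sqrt_three

lemma dseq_eq_sqrt {i : ℕ} (hR : 0 ≤ 1 - 2 * √3 * xseq i - xseq i ^ 2) :
    dseq i = √(xseq (i + 1)) := by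
  rw [dseq, xseq_succ, chord_sq_eq_of_quadratic (hansenStep_quadratic_eq hR)]

lemma Real.self_le_arcsin {t : ℝ} (h0 : 0 ≤ t) (h1 : t ≤ 1) : t ≤ arcsin t := by
  conv_lhs => rw [← sin_arcsin (by linarith) h1]
  exact sin_le (arcsin_nonneg.2 h0)

lemma Real.arcsin_le_add_pow_three {t : ℝ} (h0 : 0 ≤ t) (h1 : t ≤ 1 / 2) :
    arcsin t ≤ t + t ^ 3 := by
  have ht2 : t ^ 2 ≤ 1 / 4 := by nlinarith
  have ht3 : t ^ 3 ≤ 1 / 8 := by nlinarith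
  have hpi := pi_gt_three
  refine (arcsin_le_iff_le_sin' ⟨by nlinarith, by nlinarith⟩).2 ?_
  have hcube : (t + t ^ 3) ^ 3 ≤ 6 * t ^ 3 := by
    have : (1 + t ^ 2) ^ 3 ≤ 6 := by
      nlinarith [pow_le_pow_left₀ (by positivity) (by linarith : 1 + t ^ 2 ≤ 5 / 4) 3]
    calc (t + t ^ 3) ^ 3 = t ^ 3 * (1 + t ^ 2) ^ 3 := by ring
      _ ≤ t ^ 3 * 6 := by gcongr
      _ = 6 * t ^ 3 := by ring
  nlinarith [sin_ge_sub_cube (by positivity : 0 ≤ t + t ^ 3)]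

lemma abs_two_mul_arcsin_sub_sin_sub_le {d : ℝ} (h0 : 0 ≤ d) (h1 : d ≤ 1 / 2) :
    |2 * arcsin (d / 2) - sin (2 * arcsin (d / 2)) - d ^ 3 / 6| ≤ d ^ 4 := by
  set θ := 2 * arcsin (d / 2)
  have hd2 : d ^ 2 ≤ 1 / 4 := by nlinarith
  have hθl : d ≤ θ := by linarith [self_le_arcsin (t := d / 2) (by linarith) (by linarith)]
  have hθh : θ ≤ d + d ^ 3 / 4 := by
    linarith [arcsin_le_add_pow_three (t := d / 2) (by linarith) (by linarith)]
  have hθ2 : θ ≤ 2 * d := by nlinarith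
  have hθ0 : 0 ≤ θ := h0.trans hθl
  have hsin := abs_le.1 (sin_bound (x := θ) (by rw [abs_of_nonneg hθ0]; linarith))
  rw [abs_of_nonneg hθ0] at hsin
  have hcube : θ ^ 3 - d ^ 3 ≤ 7 / 4 * d ^ 5 := by
    have : θ ^ 2 + θ * d + d ^ 2 ≤ 7 * d ^ 2 := by nlinarith
    calc θ ^ 3 - d ^ 3 = (θ - d) * (θ ^ 2 + θ * d + d ^ 2) := by ring
      _ ≤ d ^ 3 / 4 * (7 * d ^ 2) := by gcongr; linarith
      _ = 7 / 4 * d ^ 5 := by ring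
  have hfifth : θ ^ 5 ≤ 32 * d ^ 5 := by
    calc θ ^ 5 ≤ (2 * d) ^ 5 := pow_le_pow_left₀ hθ0 hθ2 5
      _ = 32 * d ^ 5 := by ring
  have hd5 : d ^ 5 ≤ d ^ 4 / 2 := by nlinarith [pow_nonneg h0 4]
  rw [abs_le]
  constructor
  · nlinarith [pow_le_pow_left₀ h0 hθl 3]
  · nlinarith [sin_ge_sub_cube hθ0]

lemma abs_aseq_sub_le {i : ℕ} (hR : 0 ≤ 1 - 2 * √3 * xseq i - xseq i ^ 2)
    (h0 : 0 ≤ xseq (i + 1)) (h1 : xseq (i + 1) ≤ 1 / 4) :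
    |aseq i - xseq (i + 1) * (3 * xseq i - √(xseq (i + 1))) / 12| ≤ xseq (i + 1) ^ 2 / 2 := by
  set y := xseq (i + 1)
  have hy : √y ^ 2 = y := sq_sqrt h0
  have hsegment := abs_two_mul_arcsin_sub_sin_sub_le (sqrt_nonneg y)
    (by nlinarith [sqrt_nonneg y])
  have heq : aseq i - y * (3 * xseq i - √y) / 12 =
      -(2 * arcsin (√y / 2) - sin (2 * arcsin (√y / 2)) - √y ^ 3 / 6) / 2 := by
    rw [aseq, θseq, dseq_eq_sqrt hR]
    linear_combination (-√y / 12) * hy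
  have hy4 : √y ^ 4 = y ^ 2 := by rw [show 4 = 2 * 2 by rfl, pow_mul, hy]
  rw [heq, abs_div, abs_neg, abs_two]
  linarith

/-- The second region Hansen removed has area about `8.454·10⁻²¹`; in particular it is
smaller than the `6·10⁻¹⁸` he claimed. -/
theorem hansen_second_region_area :
    (8.454e-21 < aseq 3 ∧ aseq 3 < 8.455e-21) ∧ aseq 3 < 6e-18 := by
  have hx1 : xseq 1 ∈ Ioo 0.02413115 0.02413117 := hansenStep_mem_Ioo xseq_zero_mem (by norm_num)
  have hx2 : xseq 2 ∈ Ioo 0.0006080984 0.0006080996 := hansenStep_mem_Ioo hx1 (by norm_num)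
  have hx3 : xseq 3 ∈ Ioo 3.701736e-7 3.701752e-7 := hansenStep_mem_Ioo hx2 (by norm_num)
  have hx4 : xseq 4 ∈ Ioo 1.370285e-13 1.370298e-13 := hansenStep_mem_Ioo hx3 (by norm_num)
  have hd : √(xseq 4) ∈ Ioo 3.701736e-7 3.701754e-7 :=
    ⟨(lt_sqrt (by norm_num)).2 (by linarith [hx4.1]),
      (sqrt_lt' (by norm_num)).2 (by linarith [hx4.2])⟩
  have hR : 0 ≤ 1 - 2 * √3 * xseq 3 - xseq 3 ^ 2 := by
    nlinarith [sqrt_three_mem.2, hx3.1, hx3.2]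
  have harea := abs_le.1 (abs_aseq_sub_le hR (by linarith [hx4.1]) (by linarith [hx4.2]))
  have hprod_low :
      1.370285e-13 * (3 * 3.701736e-7 - 3.701754e-7) < xseq 4 * (3 * xseq 3 - √(xseq 4)) :=
    mul_lt_mul'' hx4.1 (by linarith [hx3.1, hd.2]) (by norm_num) (by norm_num)
  have hprod_high :
      xseq 4 * (3 * xseq 3 - √(xseq 4)) < 1.370298e-13 * (3 * 3.701752e-7 - 3.701736e-7) :=
    mul_lt_mul'' hx4.2 (by linarith [hx3.2, hd.1]) (by linarith [hx4.1]) (by linarith [hx3.1, hd.2])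
  have hsq : xseq 4 ^ 2 < 1.370298e-13 ^ 2 := by nlinarith [hx4.1, hx4.2]
  refine ⟨⟨?_, ?_⟩, ?_⟩ <;> linarith
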